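/- arXiv:1907.09247 — 2 statements merged into one kernel-verified Lean document; each statement's English description precedes it below -/
import Mathlib

section
/- Epistemic splitting in FAEEL (Main Theorem): the FAEEL semantics satisfies the epistemic splitting property, i.e., for every program Π, every epistemic splitting set U of Π and every splitting ⟨B_U(Π),T_U(Π)⟩, a total belief view W is a FAEEL-world view of Π if and only if there is a FAEEL-solution ⟨W_b,W_t⟩ of Π with respect to U such that W = W_b ⊔ W_t. Furthermore, if W is a FAEEL-world view of Π, then ⟨W|_U, W|_Ū⟩ is a FAEEL-solution of Π with respect to U and W = W|_U ⊔ W|_Ū. -/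
namespace Epist

attribute [local instance] Classical.propDecidable

/-- Epistemic formulas over a set (type) of atoms `α`. -/
inductive EForm (α : Type) : Type where
  | bot : EForm α
  | atom : α → EForm α
  | and : EForm α → EForm α → EForm α
  | or : EForm α → EForm α → EForm α
  | imp : EForm α → EForm α → EForm α
  | K : EForm α → EForm α

variable {α : Type}

/-- ¬φ abbreviates φ → ⊥. -/
def EForm.neg (φ : EForm α) : EForm α := .imp φ .bot

/-- ⊤ abbreviates ¬⊥. -/
def EForm.top : EForm α := EForm.neg .bot

/-- Atoms occurring in a formula. -/
def EForm.atoms : EForm α → Set α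
  | .bot => ∅
  | .atom a => {a}
  | .and φ ψ => φ.atoms ∪ ψ.atoms
  | .or φ ψ => φ.atoms ∪ ψ.atoms
  | .imp φ ψ => φ.atoms ∪ ψ.atoms
  | .K φ => φ.atoms

/-- A belief view: a set of HT-interpretations ⟨H,T⟩ (as pairs of sets of atoms). -/
abbrev BView (α : Type) := Set (Set α × Set α)

/-- W^t : the total belief view {⟨T,T⟩ : ⟨H,T⟩ ∈ W}. -/
def tview (W : BView α) : BView α := (fun i => (i.2, i.2)) '' W

/-- Wellformedness of a belief view: nonempty and H ⊆ T for all members. -/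
def isBView (W : BView α) : Prop := W.Nonempty ∧ ∀ i ∈ W, i.1 ⊆ i.2

/-- A belief view is total when all its HT-interpretations are total. -/
def totalView (W : BView α) : Prop := ∀ i ∈ W, i.1 = i.2

/-- Satisfaction of an epistemic formula by a belief interpretation ⟨W,H,T⟩. -/
def sat : EForm α → BView α → Set α → Set α → Prop
  | .bot, _, _, _ => False
  | .atom a, _, H, _ => a ∈ H
  | .and φ ψ, W, H, T => sat φ W H T ∧ sat ψ W H T
  | .or φ ψ, W, H, T => sat φ W H T ∨ sat ψ W H T
  | .imp φ ψ, W, H, T =>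
      (sat φ W H T → sat ψ W H T) ∧ (sat φ (tview W) T T → sat ψ (tview W) T T)
  | .K φ, W, _, _ => ∀ i ∈ W, sat φ W i.1 i.2

/-- ⟨W,H',T'⟩ ⊨ φ for all ⟨H',T'⟩ ∈ W. -/
def epSat (W : BView α) (φ : EForm α) : Prop := ∀ i ∈ W, sat φ W i.1 i.2

/-- W is an epistemic model of the theory Γ. -/
def epModel (W : BView α) (Γ : Set (EForm α)) : Prop :=
  isBView W ∧ ∀ φ ∈ Γ, epSat W φ

/-- ⟨W,H,T⟩ is a belief model of the theory Γ. -/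
def beliefModel (W : BView α) (H T : Set α) (Γ : Set (EForm α)) : Prop :=
  isBView W ∧ H ⊆ T ∧ (∀ φ ∈ Γ, sat φ W H T) ∧ ∀ φ ∈ Γ, epSat W φ

/-- Order ⪯ on belief interpretations: ⟨W',H',T'⟩ ⪯ ⟨W,H,T⟩. -/
def biLE (W' : BView α) (H' T' : Set α) (W : BView α) (H T : Set α) : Prop :=
  (T' = T ∧ H' ⊆ H) ∧
  (∀ i ∈ W, ∃ H₁, (H₁, i.2) ∈ W' ∧ H₁ ⊆ i.1) ∧
  (∀ i ∈ W', ∃ H₁, (H₁, i.2) ∈ W ∧ i.1 ⊆ H₁)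

/-- Strict order ≺ on belief interpretations. -/
def biLT (W' : BView α) (H' T' : Set α) (W : BView α) (H T : Set α) : Prop :=
  biLE W' H' T' W H T ∧ (W', H', T') ≠ (W, H, T)

/-- Order ⪯ on belief views. -/
def viewLE (W₁ W₂ : BView α) : Prop :=
  (∀ i ∈ W₂, ∃ H₁, (H₁, i.2) ∈ W₁ ∧ H₁ ⊆ i.1) ∧
  (∀ i ∈ W₁, ∃ H₂, (H₂, i.2) ∈ W₂ ∧ i.1 ⊆ H₂)

/-- Strict order ≺ on belief views. -/
def viewLT (W₁ W₂ : BView α) : Prop := viewLE W₁ W₂ ∧ W₁ ≠ W₂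

/-- ⟨W,T⟩ is an equilibrium belief model of Γ. -/
def eqBeliefModel (Γ : Set (EForm α)) (W : BView α) (T : Set α) : Prop :=
  totalView W ∧ beliefModel W T T Γ ∧
  ∀ W' H' T', beliefModel W' H' T' Γ → ¬ biLT W' H' T' W T T

/-- ⟨W,T⟩ is a weak equilibrium belief model of Γ: no belief-total (i.e. with total
view) belief model of Γ is ≺-smaller. -/
def weakEqBeliefModel (Γ : Set (EForm α)) (W : BView α) (T : Set α) : Prop :=
  totalView W ∧ beliefModel W T T Γ ∧
  ∀ W' H' T', totalView W' → beliefModel W' H' T' Γ → ¬ biLT W' H' T' W T T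

/-- Identification of a set of propositional interpretations with a total belief view. -/
def ofSets (S : Set (Set α)) : BView α := (fun T => (T, T)) '' S

/-- W is a FAEEL-world view of Γ iff W = { T : ⟨W,T⟩ is an equilibrium belief model }. -/
def FAEEL (Γ : Set (EForm α)) (W : BView α) : Prop :=
  isBView W ∧ totalView W ∧ W = ofSets {T | eqBeliefModel Γ W T}

/-- W is a weak autoepistemic world view of Γ. -/
def weakAEWorldView (Γ : Set (EForm α)) (W : BView α) : Prop :=
  isBView W ∧ totalView W ∧ W = ofSets {T | weakEqBeliefModel Γ W T}

/-- W is a FEEL-world view of Γ. -/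
def FEEL (Γ : Set (EForm α)) (W : BView α) : Prop :=
  totalView W ∧ epModel W Γ ∧ ∀ W', epModel W' Γ → ¬ viewLT W' W

/-- A belief view is simple iff ⟨H,T⟩,⟨H',T⟩ ∈ W imply H = H'. -/
def simpleView (W : BView α) : Prop := ∀ i ∈ W, ∀ j ∈ W, i.2 = j.2 → i.1 = j.1

/-- W is an EEL-world view of Γ. -/
def EEL (Γ : Set (EForm α)) (W : BView α) : Prop :=
  totalView W ∧ epModel W Γ ∧
  ¬ ∃ W', simpleView W' ∧ epModel W' Γ ∧ tview W' = W ∧ ∃ i ∈ W', i.1 ⊂ i.2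

/-- Ordinary here-and-there satisfaction (for objective, i.e. K-free, formulas). -/
def htSat (φ : EForm α) (H T : Set α) : Prop := sat φ (∅ : BView α) H T

/-- T is a stable model of the (objective) theory Δ. -/
def stableModel (Δ : Set (EForm α)) (T : Set α) : Prop :=
  (∀ φ ∈ Δ, htSat φ T T) ∧ ∀ H, H ⊂ T → ¬ ∀ φ ∈ Δ, htSat φ H T

/-- SM[Δ] : the set of stable models of Δ. -/
def SMset (Δ : Set (EForm α)) : Set (Set α) := {T | stableModel Δ T}

/-- Subjective reduct of a formula w.r.t. a belief view W and a signature U: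
each maximal subformula Kφ with Atoms(φ) ⊆ U is replaced by ⊤ if W ⊨ Kφ
and by ⊥ otherwise. -/
noncomputable def reduct (W : BView α) (U : Set α) : EForm α → EForm α
  | .bot => .bot
  | .atom a => .atom a
  | .and φ ψ => .and (reduct W U φ) (reduct W U ψ)
  | .or φ ψ => .or (reduct W U φ) (reduct W U ψ)
  | .imp φ ψ => .imp (reduct W U φ) (reduct W U ψ)
  | .K φ =>
      if φ.atoms ⊆ U then (if epSat W (.K φ) then EForm.top else .bot)
      else .K (reduct W U φ)

/-- W is a G91-world view of Γ iff W = SM[Γ^W]. -/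
def G91 (Γ : Set (EForm α)) (W : BView α) : Prop :=
  isBView W ∧ totalView W ∧ W = ofSets (SMset (reduct W Set.univ '' Γ))

/-- Negatively subjective reduct: each maximal subformula ¬Kφ is replaced
by ⊤ if W ⊭ Kφ and by ⊥ otherwise. -/
noncomputable def negReduct (W : BView α) : EForm α → EForm α
  | .bot => .bot
  | .atom a => .atom a
  | .and φ ψ => .and (negReduct W φ) (negReduct W ψ)
  | .or φ ψ => .or (negReduct W φ) (negReduct W ψ)
  | .imp (.K φ) .bot => if epSat W (.K φ) then .bot else EForm.top
  | .imp φ ψ => .imp (negReduct W φ) (negReduct W ψ)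
  | .K φ => .K (negReduct W φ)

/-- Atom, ⊤ or ⊥. -/
def isAtomBase (φ : EForm α) : Prop := (∃ a, φ = .atom a) ∨ φ = EForm.top ∨ φ = .bot

/-- Objective literals: l, ¬l or ¬¬l for l an atom, ⊤ or ⊥. -/
def isObjLit (φ : EForm α) : Prop :=
  isAtomBase φ ∨ (∃ ψ, isAtomBase ψ ∧ φ = EForm.neg ψ) ∨
    (∃ ψ, isAtomBase ψ ∧ φ = EForm.neg (EForm.neg ψ))

/-- Subjective literals: Kl, ¬Kl or ¬¬Kl for l an objective literal. -/
def isSubjLit (φ : EForm α) : Prop :=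
  (∃ l, isObjLit l ∧ φ = .K l) ∨ (∃ l, isObjLit l ∧ φ = EForm.neg (.K l)) ∨
    (∃ l, isObjLit l ∧ φ = EForm.neg (EForm.neg (.K l)))

/-- Positive subjective literals: Kl. -/
def isPosSubjLit (φ : EForm α) : Prop := ∃ l, isObjLit l ∧ φ = .K l

/-- A rule: a head disjunction of atoms and a body list of literals. -/
structure ERule (α : Type) where
  head : List α
  body : List (EForm α)

/-- Wellformedness of a rule: every body member is an (objective or subjective) literal. -/
def ERule.wf (r : ERule α) : Prop := ∀ φ ∈ r.body, isObjLit φ ∨ isSubjLit φ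

/-- Disjunction of atoms (⊥ when empty). -/
def disjForm : List α → EForm α
  | [] => .bot
  | a :: l => .or (.atom a) (disjForm l)

/-- Conjunction of formulas (⊤ when empty). -/
def conjForm : List (EForm α) → EForm α
  | [] => EForm.top
  | φ :: l => .and φ (conjForm l)

/-- The formula Head(r) ← Body(r) corresponding to a rule. -/
def ERule.form (r : ERule α) : EForm α := .imp (conjForm r.body) (disjForm r.head)

/-- Atoms of Head(r). -/
def ERule.headAtoms (r : ERule α) : Set α := {a | a ∈ r.head}

/-- Atoms of Body_obj(r). -/
def ERule.objBodyAtoms (r : ERule α) : Set α := {a | ∃ φ ∈ r.body, isObjLit φ ∧ a ∈ φ.atoms}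

/-- Atoms of Body_sub(r). -/
def ERule.subjBodyAtoms (r : ERule α) : Set α := {a | ∃ φ ∈ r.body, isSubjLit φ ∧ a ∈ φ.atoms}

/-- Atoms of Body⁺_sub(r). -/
def ERule.posSubjBodyAtoms (r : ERule α) : Set α :=
  {a | ∃ φ ∈ r.body, isPosSubjLit φ ∧ a ∈ φ.atoms}

/-- Atoms(r). -/
def ERule.atoms (r : ERule α) : Set α := r.headAtoms ∪ {a | ∃ φ ∈ r.body, a ∈ φ.atoms}

/-- A rule is objective if all its body literals are objective. -/
def ERule.objective (r : ERule α) : Prop := ∀ φ ∈ r.body, isObjLit φ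

/-- A program is a set of rules. -/
abbrev EProgram (α : Type) := Set (ERule α)

def progWF (P : EProgram α) : Prop := ∀ r ∈ P, r.wf

/-- The theory consisting of the formulas of the rules of a program. -/
def progTheory (P : EProgram α) : Set (EForm α) := ERule.form '' P

def progAtoms (P : EProgram α) : Set α := {a | ∃ r ∈ P, a ∈ r.atoms}

def progObjective (P : EProgram α) : Prop := ∀ r ∈ P, r.objective

/-- U is an epistemic splitting set of P. -/
def splittingSet (P : EProgram α) (U : Set α) : Prop :=
  ∀ r ∈ P, r.atoms ⊆ U ∨ (r.objBodyAtoms ∪ r.headAtoms) ∩ U = ∅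

/-- ⟨B,Tp⟩ is a splitting of P w.r.t. U. -/
def isSplitting (P : EProgram α) (U : Set α) (B Tp : EProgram α) : Prop :=
  B ∩ Tp = ∅ ∧ B ∪ Tp = P ∧ (∀ r ∈ B, r.atoms ⊆ U) ∧
    ∀ r ∈ Tp, (r.objBodyAtoms ∪ r.headAtoms) ∩ U = ∅

/-- Subjective reduct of a rule. -/
noncomputable def ruleReduct (W : BView α) (U : Set α) (r : ERule α) : ERule α :=
  ⟨r.head, r.body.map (reduct W U)⟩

/-- E_U(Π,W) := (T_U(Π))^W_U, here taking the top part Tp as argument. -/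
noncomputable def EU (Tp : EProgram α) (W : BView α) (U : Set α) : EProgram α :=
  ruleReduct W U '' Tp

/-- W_b ⊔ W_t (for total belief views: pointwise unions). -/
def vjoin (W₁ W₂ : BView α) : BView α :=
  {i | ∃ j ∈ W₁, ∃ k ∈ W₂, i = (j.1 ∪ k.1, j.2 ∪ k.2)}

/-- W|_U (for total belief views: pointwise intersection with U). -/
def vrestrict (W : BView α) (U : Set α) : BView α :=
  {i | ∃ j ∈ W, i = (j.1 ∩ U, j.2 ∩ U)}

/-- Epistemic dependence dep(a,b). -/
def dep (P : EProgram α) (a b : α) : Prop :=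
  ∃ r ∈ P, a ∈ r.headAtoms ∪ r.objBodyAtoms ∧ b ∈ r.subjBodyAtoms

/-- Positive epistemic dependence dep⁺(a,b). -/
def depPos (P : EProgram α) (a b : α) : Prop :=
  ∃ r ∈ P, a ∈ r.headAtoms ∪ r.objBodyAtoms ∧ b ∈ r.posSubjBodyAtoms

/-- P is epistemically stratified. -/
def stratified (P : EProgram α) : Prop :=
  ∃ lam : α → ℕ,
    (∀ r ∈ P, ∀ a ∈ r.atoms \ r.subjBodyAtoms, ∀ b ∈ r.atoms \ r.subjBodyAtoms,
      lam a = lam b) ∧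
    ∀ a b, dep P a b → lam a > lam b

/-- P is epistemically tight. -/
def tight (P : EProgram α) : Prop :=
  ∃ lam : α → ℕ,
    (∀ r ∈ P, ∀ a ∈ r.atoms \ r.subjBodyAtoms, ∀ b ∈ r.atoms \ r.subjBodyAtoms,
      lam a = lam b) ∧
    ∀ a b, depPos P a b → lam a > lam b

/-- A semantics S satisfies the epistemic splitting property. -/
def satisfiesSplitting (S : EProgram α → BView α → Prop) : Prop :=
  ∀ P : EProgram α, progWF P → ∀ U : Set α, splittingSet P U →
    ∀ B Tp : EProgram α, isSplitting P U B Tp →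
      ∀ W : BView α,
        S P W ↔ ∃ Wb Wt, S B Wb ∧ S (EU Tp Wb U) Wt ∧ W = vjoin Wb Wt

/-- A semantics S satisfies supra-ASP. -/
def supraASP (S : EProgram α → BView α → Prop) : Prop :=
  ∀ P : EProgram α, progWF P → progObjective P →
    (SMset (progTheory P) ≠ ∅ ∧ ∀ W, (S P W ↔ W = ofSets (SMset (progTheory P)))) ∨
    (SMset (progTheory P) = ∅ ∧ ∀ W, ¬ S P W)

end Epist
/-!
Satisfaction of a formula depends only on its atoms, so a belief interpretation satisfies the
bottom rules iff its restriction to `U` does. It satisfies the top rules iff its restriction to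
`Uᶜ` satisfies their subjective reduct w.r.t. `Wv`, as long as its view restricts to the total
view `Wv` on `U`: every `Kφ` replaced by the reduct only sees that restriction. Hence ⟨W, H, T⟩
is a belief model of Π iff ⟨W|U, H ∩ U, T ∩ U⟩ and ⟨W|Uᶜ, H ∩ Uᶜ, T ∩ Uᶜ⟩ are belief models of
the two parts. Minimality transfers both ways: a smaller model of one part, completed by the
other part of `W` (`glue`), is a smaller model of Π; a smaller model of Π restricts to a smaller
model of the bottom part or, when that restriction is not smaller, of the reduced top part.
So the equilibrium models of Π are exactly the unions of equilibrium models of the two parts,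
and both statements follow at the level of world views.
-/

namespace Epist

variable {α : Type}

lemma union_inter_eq_left_of_subset {X Y U : Set α} (hX : X ⊆ U) (hY : Y ⊆ Uᶜ) :
    (X ∪ Y) ∩ U = X := by
  rw [Set.union_inter_distrib_right, Set.inter_eq_left.2 hX,
    Set.disjoint_iff_inter_eq_empty.1 (Set.subset_compl_iff_disjoint_right.1 hY), Set.union_empty]

lemma union_inter_compl_eq_right_of_subset {X Y U : Set α} (hX : X ⊆ U) (hY : Y ⊆ Uᶜ) :
    (X ∪ Y) ∩ Uᶜ = Y := by
  rw [Set.union_comm]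
  exact union_inter_eq_left_of_subset hY (by rwa [compl_compl])

section Views

lemma mem_of_totalView {W : BView α} (h : totalView W) {i : Set α × Set α} (hi : i ∈ W) :
    (i.2, i.2) ∈ W := by
  convert hi using 1
  exact Prod.ext (h i hi).symm rfl

lemma tview_eq_self {W : BView α} (h : totalView W) : tview W = W := by
  ext ⟨H, T⟩
  constructor
  · rintro ⟨i, hi, hiT⟩
    obtain ⟨rfl, rfl⟩ := Prod.mk.inj hiT
    exact mem_of_totalView h hi
  · intro hi
    obtain rfl : H = T := h _ hi
    exact ⟨_, hi, rfl⟩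

lemma totalView_tview (W : BView α) : totalView (tview W) := by
  rintro _ ⟨i, -, rfl⟩
  rfl

lemma tview_tview (W : BView α) : tview (tview W) = tview W :=
  tview_eq_self (totalView_tview W)

lemma vrestrict_eq_image (W : BView α) (A : Set α) :
    vrestrict W A = (fun j => (j.1 ∩ A, j.2 ∩ A)) '' W := by
  ext i
  simp only [vrestrict, Set.mem_ofPred_eq, Set.mem_image, eq_comm]

lemma mem_vrestrict {W : BView α} {i : Set α × Set α} (hi : i ∈ W) (A : Set α) :
    (i.1 ∩ A, i.2 ∩ A) ∈ vrestrict W A :=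
  ⟨i, hi, rfl⟩

lemma vrestrict_nonempty_iff {W : BView α} {A : Set α} :
    (vrestrict W A).Nonempty ↔ W.Nonempty := by
  rw [vrestrict_eq_image, Set.image_nonempty]

lemma vrestrict_vrestrict_self (W : BView α) (A : Set α) :
    vrestrict (vrestrict W A) A = vrestrict W A := by
  simp only [vrestrict_eq_image, Set.image_image, Set.inter_assoc, Set.inter_self]

lemma vrestrict_tview (W : BView α) (A : Set α) :
    vrestrict (tview W) A = tview (vrestrict W A) := by
  simp only [vrestrict_eq_image, tview, Set.image_image]

lemma totalView_vrestrict {W : BView α} (h : totalView W) (A : Set α) :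
    totalView (vrestrict W A) := by
  rintro _ ⟨i, hi, rfl⟩
  simp [h i hi]

lemma totalView_of_vrestrict {W : BView α} {U : Set α} (hU : totalView (vrestrict W U))
    (hUc : totalView (vrestrict W Uᶜ)) : totalView W := by
  intro i hi
  have h₁ : i.1 ∩ U = i.2 ∩ U := hU _ (mem_vrestrict hi U)
  have h₂ : i.1 ∩ Uᶜ = i.2 ∩ Uᶜ := hUc _ (mem_vrestrict hi Uᶜ)
  rw [← Set.inter_union_compl i.1 U, ← Set.inter_union_compl i.2 U, h₁, h₂]

lemma isBView_iff_vrestrict {W : BView α} {U : Set α} :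
    isBView W ↔ isBView (vrestrict W U) ∧ isBView (vrestrict W Uᶜ) := by
  simp only [isBView, vrestrict_nonempty_iff]
  simp only [vrestrict_eq_image, Set.forall_mem_image]
  constructor
  · rintro ⟨hne, hsub⟩
    exact ⟨⟨hne, fun i hi => Set.inter_subset_inter_left _ (hsub i hi)⟩,
      ⟨hne, fun i hi => Set.inter_subset_inter_left _ (hsub i hi)⟩⟩
  · rintro ⟨⟨hne, hU⟩, ⟨-, hUc⟩⟩
    refine ⟨hne, fun i hi => ?_⟩
    rw [← Set.inter_union_compl i.1 U, ← Set.inter_union_compl i.2 U]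
    exact Set.union_subset_union (hU hi) (hUc hi)

lemma isBView_vrestrict {W : BView α} (h : isBView W) (A : Set α) : isBView (vrestrict W A) :=
  (isBView_iff_vrestrict.1 h).1

lemma tview_eq_of_viewLE {W₁ W : BView α} (hle : viewLE W₁ W) (hW : totalView W) :
    tview W₁ = W := by
  ext ⟨H, T⟩
  constructor
  · rintro ⟨j, hj, hjT⟩
    obtain ⟨rfl, rfl⟩ := Prod.mk.inj hjT
    obtain ⟨H₂, hH₂, -⟩ := hle.2 j hj
    exact mem_of_totalView hW (i := (H₂, j.2)) hH₂
  · intro hi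
    obtain rfl : H = T := hW _ hi
    obtain ⟨H₁, hH₁, -⟩ := hle.1 _ hi
    exact ⟨_, hH₁, rfl⟩

lemma viewLE_tview {W : BView α} (hW : ∀ i ∈ W, i.1 ⊆ i.2) : viewLE W (tview W) := by
  refine ⟨?_, fun i hi => ⟨i.2, ⟨i, hi, rfl⟩, hW i hi⟩⟩
  rintro _ ⟨i, hi, rfl⟩
  exact ⟨i.1, hi, hW i hi⟩

lemma viewLE_vrestrict {W₁ W : BView α} (hle : viewLE W₁ W) (A : Set α) :
    viewLE (vrestrict W₁ A) (vrestrict W A) := by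
  constructor
  · rintro _ ⟨i, hi, rfl⟩
    obtain ⟨H, hH, hHi⟩ := hle.1 i hi
    exact ⟨H ∩ A, mem_vrestrict hH A, Set.inter_subset_inter_left _ hHi⟩
  · rintro _ ⟨i, hi, rfl⟩
    obtain ⟨H, hH, hHi⟩ := hle.2 i hi
    exact ⟨H ∩ A, mem_vrestrict hH A, Set.inter_subset_inter_left _ hHi⟩

lemma biLE_vrestrict {W₁ W : BView α} {H₁ T₁ H T : Set α} (hle : biLE W₁ H₁ T₁ W H T)
    (A : Set α) : biLE (vrestrict W₁ A) (H₁ ∩ A) (T₁ ∩ A) (vrestrict W A) (H ∩ A) (T ∩ A) :=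
  ⟨⟨hle.1.1 ▸ rfl, Set.inter_subset_inter_left _ hle.1.2⟩, viewLE_vrestrict hle.2 A⟩

lemma vrestrict_ofSets (S : Set (Set α)) (A : Set α) :
    vrestrict (ofSets S) A = ofSets ((· ∩ A) '' S) := by
  simp only [vrestrict_eq_image, ofSets, Set.image_image]

lemma vjoin_ofSets (S₁ S₂ : Set (Set α)) :
    vjoin (ofSets S₁) (ofSets S₂) = ofSets (Set.image2 (· ∪ ·) S₁ S₂) := by
  ext i
  constructor
  · rintro ⟨_, ⟨T₁, h₁, rfl⟩, _, ⟨T₂, h₂, rfl⟩, rfl⟩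
    exact ⟨_, ⟨T₁, h₁, T₂, h₂, rfl⟩, rfl⟩
  · rintro ⟨_, ⟨T₁, h₁, T₂, h₂, rfl⟩, rfl⟩
    exact ⟨_, ⟨T₁, h₁, rfl⟩, _, ⟨T₂, h₂, rfl⟩, rfl⟩

lemma FAEEL_iff {Γ : Set (EForm α)} {W : BView α} :
    FAEEL Γ W ↔ W.Nonempty ∧ W = ofSets {T | eqBeliefModel Γ W T} := by
  refine ⟨fun h => ⟨h.1.1, h.2.2⟩, fun ⟨hne, hW⟩ => ?_⟩
  have htot : totalView W := by
    rw [hW]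
    rintro _ ⟨T, -, rfl⟩
    rfl
  exact ⟨⟨hne, fun i hi => (htot i hi).subset⟩, htot, hW⟩

end Views

lemma eq_image2_union_of_forall_mem_iff {S Sb St : Set (Set α)} {U : Set α}
    (hb : ∀ X ∈ Sb, X ⊆ U) (ht : ∀ X ∈ St, X ⊆ Uᶜ)
    (h : ∀ T, T ∈ S ↔ T ∩ U ∈ Sb ∧ T ∩ Uᶜ ∈ St) : S = Set.image2 (· ∪ ·) Sb St := by
  ext T
  constructor
  · intro hT
    exact ⟨_, ((h T).1 hT).1, _, ((h T).1 hT).2, Set.inter_union_compl T U⟩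
  · rintro ⟨X, hX, Y, hY, rfl⟩
    rw [h, union_inter_eq_left_of_subset (hb X hX) (ht Y hY),
      union_inter_compl_eq_right_of_subset (hb X hX) (ht Y hY)]
    exact ⟨hX, hY⟩

lemma image_inter_image2_union {Sb St : Set (Set α)} {U : Set α}
    (hb : ∀ X ∈ Sb, X ⊆ U) (ht : ∀ X ∈ St, X ⊆ Uᶜ) (hne : St.Nonempty) :
    (· ∩ U) '' Set.image2 (· ∪ ·) Sb St = Sb := by
  rw [Set.image_image2]
  ext X
  refine ⟨?_, fun hX => ⟨X, hX, hne.some, hne.some_mem, ?_⟩⟩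
  · rintro ⟨X, hX, Y, hY, rfl⟩
    simpa only [union_inter_eq_left_of_subset (hb X hX) (ht Y hY)] using hX
  · exact union_inter_eq_left_of_subset (hb X hX) (ht _ hne.some_mem)

lemma image_inter_compl_image2_union {Sb St : Set (Set α)} {U : Set α}
    (hb : ∀ X ∈ Sb, X ⊆ U) (ht : ∀ X ∈ St, X ⊆ Uᶜ) (hne : Sb.Nonempty) :
    (· ∩ Uᶜ) '' Set.image2 (· ∪ ·) Sb St = St := by
  rw [Set.image2_swap]
  simp_rw [Set.union_comm]
  exact image_inter_image2_union ht (fun X hX => by rw [compl_compl]; exact hb X hX) hne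

section Semantics

lemma sat_top (W : BView α) (H T : Set α) : sat EForm.top W H T :=
  ⟨id, id⟩

lemma sat_K_iff_epSat_K (φ : EForm α) (W : BView α) (H T : Set α) :
    sat (.K φ) W H T ↔ epSat W (.K φ) := by
  rcases W.eq_empty_or_nonempty with rfl | ⟨i, hi⟩
  · simp [sat, epSat]
  · exact ⟨fun h _ _ => h, fun h => h i hi⟩

lemma exists_mem_inter_eq_of_vrestrict_eq {W₁ W₂ : BView α} {A : Set α}
    (hW : vrestrict W₁ A = vrestrict W₂ A) {i : Set α × Set α} (hi : i ∈ W₁) :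
    ∃ j ∈ W₂, i.1 ∩ A = j.1 ∩ A ∧ i.2 ∩ A = j.2 ∩ A := by
  obtain ⟨j, hj, hij⟩ : (i.1 ∩ A, i.2 ∩ A) ∈ vrestrict W₂ A := hW ▸ mem_vrestrict hi A
  exact ⟨j, hj, Prod.mk.inj hij⟩

theorem sat_congr {A : Set α} (φ : EForm α) (hφ : φ.atoms ⊆ A) {W₁ W₂ : BView α}
    {H₁ T₁ H₂ T₂ : Set α} (hW : vrestrict W₁ A = vrestrict W₂ A) (hH : H₁ ∩ A = H₂ ∩ A)
    (hT : T₁ ∩ A = T₂ ∩ A) : sat φ W₁ H₁ T₁ ↔ sat φ W₂ H₂ T₂ := by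
  induction φ generalizing W₁ W₂ H₁ T₁ H₂ T₂ with
  | bot => rfl
  | atom a =>
    have ha : a ∈ A := hφ rfl
    simpa [sat, ha] using congrArg (a ∈ ·) hH
  | and φ ψ ihφ ihψ =>
    exact and_congr (ihφ (fun a ha => hφ (Or.inl ha)) hW hH hT)
      (ihψ (fun a ha => hφ (Or.inr ha)) hW hH hT)
  | or φ ψ ihφ ihψ =>
    exact or_congr (ihφ (fun a ha => hφ (Or.inl ha)) hW hH hT)
      (ihψ (fun a ha => hφ (Or.inr ha)) hW hH hT)
  | imp φ ψ ihφ ihψ =>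
    have hφ₁ : φ.atoms ⊆ A := fun a ha => hφ (Or.inl ha)
    have hψ₁ : ψ.atoms ⊆ A := fun a ha => hφ (Or.inr ha)
    have hWt : vrestrict (tview W₁) A = vrestrict (tview W₂) A := by
      rw [vrestrict_tview, vrestrict_tview, hW]
    exact and_congr (imp_congr (ihφ hφ₁ hW hH hT) (ihψ hψ₁ hW hH hT))
      (imp_congr (ihφ hφ₁ hWt hT hT) (ihψ hψ₁ hWt hT hT))
  | K φ ih =>
    have transfer : ∀ {V₁ V₂ : BView α}, vrestrict V₁ A = vrestrict V₂ A →
        (∀ i ∈ V₁, sat φ V₁ i.1 i.2) → ∀ j ∈ V₂, sat φ V₂ j.1 j.2 := by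
      intro V₁ V₂ hV h j hj
      obtain ⟨i, hi, h₁, h₂⟩ := exists_mem_inter_eq_of_vrestrict_eq hV.symm hj
      exact (ih hφ hV h₁.symm h₂.symm).1 (h i hi)
    exact ⟨transfer hW, transfer hW.symm⟩

lemma epSat_congr {A : Set α} {φ : EForm α} (hφ : φ.atoms ⊆ A) {W₁ W₂ : BView α}
    (hW : vrestrict W₁ A = vrestrict W₂ A) : epSat W₁ φ ↔ epSat W₂ φ :=
  sat_congr (.K φ) hφ hW (H₁ := ∅) (T₁ := ∅) (H₂ := ∅) (T₂ := ∅) rfl rfl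

lemma sat_vrestrict_iff {A : Set α} {φ : EForm α} (hφ : φ.atoms ⊆ A) (W : BView α)
    (H T : Set α) : sat φ (vrestrict W A) (H ∩ A) (T ∩ A) ↔ sat φ W H T :=
  sat_congr φ hφ (vrestrict_vrestrict_self W A) (by rw [Set.inter_assoc, Set.inter_self])
    (by rw [Set.inter_assoc, Set.inter_self])

lemma epSat_vrestrict_iff {A : Set α} {φ : EForm α} (hφ : φ.atoms ⊆ A) (W : BView α) :
    epSat (vrestrict W A) φ ↔ epSat W φ :=
  epSat_congr hφ (vrestrict_vrestrict_self W A)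

theorem sat_persist {W : BView α} (hW : ∀ i ∈ W, i.1 ⊆ i.2) (φ : EForm α) {H T : Set α}
    (hHT : H ⊆ T) (h : sat φ W H T) : sat φ (tview W) T T := by
  induction φ generalizing H T with
  | bot => exact h
  | atom a => exact hHT h
  | and φ ψ ihφ ihψ => exact ⟨ihφ hHT h.1, ihψ hHT h.2⟩
  | or φ ψ ihφ ihψ => exact h.imp (ihφ hHT) (ihψ hHT)
  | imp φ ψ => exact ⟨h.2, by rw [tview_tview]; exact h.2⟩
  | K φ ih =>
    rintro _ ⟨i, hi, rfl⟩
    exact ih (hW i hi) (h i hi)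

theorem sat_reduct_iff {Wv : BView α} {U : Set α} (hv : totalView Wv) (φ : EForm α)
    {W : BView α} (hW : vrestrict W U = Wv) {H T : Set α} :
    sat (reduct Wv U φ) W H T ↔ sat φ W H T := by
  induction φ generalizing W H T with
  | bot => rfl
  | atom a => rfl
  | and φ ψ ihφ ihψ => exact and_congr (ihφ hW) (ihψ hW)
  | or φ ψ ihφ ihψ => exact or_congr (ihφ hW) (ihψ hW)
  | imp φ ψ ihφ ihψ =>
    -- the second clause of `→` is evaluated in `tview W`, which also restricts to `Wv`
    have hWt : vrestrict (tview W) U = Wv := by rw [vrestrict_tview, hW, tview_eq_self hv]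
    exact and_congr (imp_congr (ihφ hW) (ihψ hW)) (imp_congr (ihφ hWt) (ihψ hWt))
  | K φ ih =>
    by_cases hφ : φ.atoms ⊆ U
    · have hK : sat (.K φ) W H T ↔ epSat Wv (.K φ) := by
        rw [sat_K_iff_epSat_K, ← hW, epSat_vrestrict_iff (φ := .K φ) hφ]
      by_cases hWv : epSat Wv (.K φ)
      · rw [reduct, if_pos hφ, if_pos hWv]
        exact iff_of_true (sat_top W H T) (hK.2 hWv)
      · rw [reduct, if_pos hφ, if_neg hWv]
        exact iff_of_false id (hK.not.2 hWv)
    · rw [reduct, if_neg hφ]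
      exact forall₂_congr fun i _ => ih hW

end Semantics

section Rules

lemma sat_disjForm {l : List α} {W : BView α} {H T : Set α} :
    sat (disjForm l) W H T ↔ ∃ a ∈ l, a ∈ H := by
  induction l with
  | nil => simp [disjForm, sat]
  | cons a l ih => simp [disjForm, sat, ih]

lemma atoms_conjForm (l : List (EForm α)) :
    (conjForm l).atoms = {a | ∃ φ ∈ l, a ∈ φ.atoms} := by
  induction l with
  | nil => simp [conjForm, EForm.top, EForm.neg, EForm.atoms]
  | cons φ l ih => ext a; simp [conjForm, EForm.atoms, ih]

lemma atoms_disjForm (l : List α) : (disjForm l).atoms = {a | a ∈ l} := by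
  induction l with
  | nil => simp [disjForm, EForm.atoms]
  | cons a l ih => ext b; simp [disjForm, EForm.atoms, ih]

lemma ERule.atoms_form_subset (r : ERule α) : r.form.atoms ⊆ r.atoms := by
  rintro a (ha | ha)
  · rw [atoms_conjForm] at ha
    exact Or.inr ha
  · rw [atoms_disjForm] at ha
    exact Or.inl ha

lemma reduct_conjForm (Wv : BView α) (U : Set α) (l : List (EForm α)) :
    reduct Wv U (conjForm l) = conjForm (l.map (reduct Wv U)) := by
  induction l with
  | nil => rfl
  | cons φ l ih => simp [conjForm, reduct, ih]

lemma reduct_disjForm (Wv : BView α) (U : Set α) (l : List α) :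
    reduct Wv U (disjForm l) = disjForm l := by
  induction l with
  | nil => rfl
  | cons a l ih => simp [disjForm, reduct, ih]

lemma ruleReduct_form (Wv : BView α) (U : Set α) (r : ERule α) :
    (ruleReduct Wv U r).form = reduct Wv U r.form := by
  simp [ruleReduct, ERule.form, reduct, reduct_conjForm, reduct_disjForm]

lemma isAtomBase.reduct_eq {φ : EForm α} (h : isAtomBase φ) (Wv : BView α) (U : Set α) :
    reduct Wv U φ = φ := by
  rcases h with ⟨a, rfl⟩ | rfl | rfl <;> rfl

lemma isObjLit.reduct_eq {φ : EForm α} (h : isObjLit φ) (Wv : BView α) (U : Set α) :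
    reduct Wv U φ = φ := by
  rcases h with h | ⟨ψ, hψ, rfl⟩ | ⟨ψ, hψ, rfl⟩
  · exact h.reduct_eq Wv U
  · simp [EForm.neg, reduct, hψ.reduct_eq]
  · simp [EForm.neg, reduct, hψ.reduct_eq]

lemma isAtomBase.atoms_subsingleton {φ : EForm α} (h : isAtomBase φ) :
    φ.atoms.Subsingleton := by
  rcases h with ⟨a, rfl⟩ | rfl | rfl
  · exact Set.subsingleton_singleton
  · simp [EForm.top, EForm.neg, EForm.atoms]
  · exact Set.subsingleton_empty

lemma isObjLit.atoms_subsingleton {φ : EForm α} (h : isObjLit φ) : φ.atoms.Subsingleton := by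
  rcases h with h | ⟨ψ, hψ, rfl⟩ | ⟨ψ, hψ, rfl⟩
  · exact h.atoms_subsingleton
  · simpa [EForm.neg, EForm.atoms] using hψ.atoms_subsingleton
  · simpa [EForm.neg, EForm.atoms] using hψ.atoms_subsingleton

lemma subset_compl_of_subsingleton {s U : Set α} (hs : s.Subsingleton) (hsU : ¬ s ⊆ U) :
    s ⊆ Uᶜ := by
  intro a ha haU
  exact hsU fun b hb => hs hb ha ▸ haU

lemma isSubjLit.atoms_reduct_subset {φ : EForm α} (h : isSubjLit φ) (Wv : BView α)
    (U : Set α) : (reduct Wv U φ).atoms ⊆ Uᶜ := by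
  have hK : ∀ l : EForm α, isObjLit l → (reduct Wv U (.K l)).atoms ⊆ Uᶜ := by
    intro l hl
    by_cases hlU : l.atoms ⊆ U
    · rw [reduct, if_pos hlU]
      split_ifs <;> simp [EForm.top, EForm.neg, EForm.atoms]
    · -- an objective literal has at most one atom, so `l` mentions no atom of `U` at all
      rw [reduct, if_neg hlU, hl.reduct_eq]
      exact subset_compl_of_subsingleton hl.atoms_subsingleton hlU
  rcases h with ⟨l, hl, rfl⟩ | ⟨l, hl, rfl⟩ | ⟨l, hl, rfl⟩
  · exact hK l hl
  · simpa [EForm.neg, reduct, EForm.atoms] using hK l hl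
  · simpa [EForm.neg, reduct, EForm.atoms] using hK l hl

lemma ERule.atoms_ruleReduct_form_subset {r : ERule α} {U : Set α} (hr : r.wf)
    (htop : (r.objBodyAtoms ∪ r.headAtoms) ∩ U = ∅) (Wv : BView α) :
    (ruleReduct Wv U r).form.atoms ⊆ Uᶜ := by
  have hout : r.objBodyAtoms ∪ r.headAtoms ⊆ Uᶜ :=
    Set.subset_compl_iff_disjoint_right.2 (Set.disjoint_iff_inter_eq_empty.2 htop)
  rintro a (ha | ha)
  · simp only [ruleReduct, atoms_conjForm, List.mem_map, Set.mem_ofPred_eq] at ha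
    obtain ⟨_, ⟨φ, hφ, rfl⟩, haφ⟩ := ha
    rcases hr φ hφ with hobj | hsubj
    · rw [hobj.reduct_eq] at haφ
      exact hout (Or.inl ⟨φ, hφ, hobj, haφ⟩)
    · exact hsubj.atoms_reduct_subset Wv U haφ
  · rw [atoms_disjForm] at ha
    exact hout (Or.inr ha)

lemma ERule.sat_form_of_sat_tview {r : ERule α} {W : BView α} {H T : Set α}
    (hW : ∀ i ∈ W, i.1 ⊆ i.2) (hHT : H ⊆ T) (hhead : ∀ a ∈ r.head, a ∈ T → a ∈ H)
    (h : sat r.form (tview W) T T) : sat r.form W H T := by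
  refine ⟨fun hbody => ?_, h.1⟩
  obtain ⟨a, ha, haT⟩ := sat_disjForm.1 (h.1 (sat_persist hW _ hHT hbody))
  exact sat_disjForm.2 ⟨a, ha, hhead a ha haT⟩

end Rules

lemma subset_iff_inter_subset_and_inter_compl_subset {H T U : Set α} :
    H ⊆ T ↔ H ∩ U ⊆ T ∩ U ∧ H ∩ Uᶜ ⊆ T ∩ Uᶜ := by
  refine ⟨fun h => ⟨Set.inter_subset_inter_left _ h, Set.inter_subset_inter_left _ h⟩,
    fun ⟨hU, hUc⟩ => ?_⟩
  rw [← Set.inter_union_compl H U, ← Set.inter_union_compl T U]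
  exact Set.union_subset_union hU hUc

lemma forall_epSat_iff {Γ : Set (EForm α)} {W : BView α} :
    (∀ φ ∈ Γ, epSat W φ) ↔ ∀ i ∈ W, ∀ φ ∈ Γ, sat φ W i.1 i.2 :=
  ⟨fun h i hi φ hφ => h φ hφ i hi, fun h φ hφ i hi => h i hi φ hφ⟩

lemma forall_epSat_vrestrict_iff {Γ : Set (EForm α)} {W : BView α} {A : Set α} :
    (∀ φ ∈ Γ, epSat (vrestrict W A) φ) ↔
      ∀ i ∈ W, ∀ φ ∈ Γ, sat φ (vrestrict W A) (i.1 ∩ A) (i.2 ∩ A) := by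
  refine ⟨fun h i hi φ hφ => h φ hφ _ (mem_vrestrict hi A), ?_⟩
  rintro h φ hφ _ ⟨i, hi, rfl⟩
  exact h i hi φ hφ

lemma beliefModel_vrestrict {Γ Γ' : Set (EForm α)} {A : Set α} (hΓ' : Γ' ⊆ Γ)
    (hA : ∀ φ ∈ Γ', φ.atoms ⊆ A) {W : BView α} {H T : Set α} (h : beliefModel W H T Γ) :
    beliefModel (vrestrict W A) (H ∩ A) (T ∩ A) Γ' :=
  ⟨isBView_vrestrict h.1 A, Set.inter_subset_inter_left _ h.2.1,
    fun φ hφ => (sat_vrestrict_iff (hA φ hφ) W H T).2 (h.2.2.1 φ (hΓ' hφ)),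
    fun φ hφ => (epSat_vrestrict_iff (hA φ hφ) W).2 (h.2.2.2 φ (hΓ' hφ))⟩

section Splitting

variable {P B Tp : EProgram α} {U : Set α}

lemma isSplitting.mem_iff (hBT : isSplitting P U B Tp) {r : ERule α} :
    r ∈ P ↔ r ∈ B ∨ r ∈ Tp := by
  rw [← hBT.2.1]
  rfl

lemma isSplitting.atoms_bottom (hBT : isSplitting P U B Tp) :
    ∀ φ ∈ progTheory B, φ.atoms ⊆ U := by
  rintro _ ⟨r, hr, rfl⟩
  exact r.atoms_form_subset.trans (hBT.2.2.1 r hr)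

lemma isSplitting.atoms_EU (hBT : isSplitting P U B Tp) (hwf : progWF Tp) (Wv : BView α) :
    ∀ φ ∈ progTheory (EU Tp Wv U), φ.atoms ⊆ Uᶜ := by
  rintro _ ⟨_, ⟨r, hr, rfl⟩, rfl⟩
  exact ERule.atoms_ruleReduct_form_subset (hwf r hr) (hBT.2.2.2 r hr) Wv

lemma isSplitting.forall_sat_iff (hBT : isSplitting P U B Tp) (hwf : progWF Tp)
    {W Wv : BView α} (hW : vrestrict W U = Wv) (hv : totalView Wv) (H T : Set α) :
    (∀ φ ∈ progTheory P, sat φ W H T) ↔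
      (∀ φ ∈ progTheory B, sat φ (vrestrict W U) (H ∩ U) (T ∩ U)) ∧
      (∀ φ ∈ progTheory (EU Tp Wv U), sat φ (vrestrict W Uᶜ) (H ∩ Uᶜ) (T ∩ Uᶜ)) := by
  simp only [progTheory, EU, Set.forall_mem_image, hBT.mem_iff, or_imp, forall_and]
  refine and_congr (forall₂_congr fun r hr => ?_) (forall₂_congr fun r hr => ?_)
  · exact (sat_vrestrict_iff (r.atoms_form_subset.trans (hBT.2.2.1 r hr)) W H T).symm
  · rw [sat_vrestrict_iff (ERule.atoms_ruleReduct_form_subset (hwf r hr) (hBT.2.2.2 r hr) Wv),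
      ruleReduct_form, sat_reduct_iff hv _ hW]

lemma isSplitting.beliefModel_iff (hBT : isSplitting P U B Tp) (hwf : progWF Tp)
    {W Wv : BView α} (hW : vrestrict W U = Wv) (hv : totalView Wv) {H T : Set α} :
    beliefModel W H T (progTheory P) ↔
      beliefModel (vrestrict W U) (H ∩ U) (T ∩ U) (progTheory B) ∧
      beliefModel (vrestrict W Uᶜ) (H ∩ Uᶜ) (T ∩ Uᶜ) (progTheory (EU Tp Wv U)) := by
  have hep : (∀ φ ∈ progTheory P, epSat W φ) ↔
      (∀ φ ∈ progTheory B, epSat (vrestrict W U) φ) ∧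
      (∀ φ ∈ progTheory (EU Tp Wv U), epSat (vrestrict W Uᶜ) φ) := by
    rw [forall_epSat_iff, forall_epSat_vrestrict_iff, forall_epSat_vrestrict_iff,
      ← forall₂_and]
    exact forall₂_congr fun i _ => hBT.forall_sat_iff hwf hW hv i.1 i.2
  rw [beliefModel, beliefModel, beliefModel, isBView_iff_vrestrict (U := U),
    subset_iff_inter_subset_and_inter_compl_subset (U := U), hBT.forall_sat_iff hwf hW hv, hep]
  tauto

lemma isSplitting.beliefModel_bottom (hBT : isSplitting P U B Tp) {W : BView α} {H T : Set α}
    (h : beliefModel W H T (progTheory P)) :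
    beliefModel (vrestrict W U) (H ∩ U) (T ∩ U) (progTheory B) :=
  beliefModel_vrestrict (Set.image_mono fun _ hr => hBT.mem_iff.2 (Or.inl hr))
    hBT.atoms_bottom h

/-- Here `W|U` need not be total, so the reduct is not available; the top rules still hold
because their bodies are persistent and their heads lie outside `U`, where `W` is total. -/
lemma isSplitting.beliefModel_of_bottom (hBT : isSplitting P U B Tp) {W : BView α}
    {H T : Set α} (hW : isBView W) (hHT : H ⊆ T) (hHU : H ∩ Uᶜ = T ∩ Uᶜ)
    (hWU : totalView (vrestrict W Uᶜ))
    (hB : beliefModel (vrestrict W U) (H ∩ U) (T ∩ U) (progTheory B))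
    (hP : beliefModel (tview W) T T (progTheory P)) : beliefModel W H T (progTheory P) := by
  have htop : ∀ r ∈ Tp, ∀ {H' T' : Set α}, H' ⊆ T' → H' ∩ Uᶜ = T' ∩ Uᶜ →
      sat r.form (tview W) T' T' → sat r.form W H' T' := by
    intro r hr H' T' hHT' hHU' h
    refine r.sat_form_of_sat_tview hW.2 hHT' (fun a ha haT => ?_) h
    have haU : a ∈ Uᶜ := Set.subset_compl_iff_disjoint_right.2
      (Set.disjoint_iff_inter_eq_empty.2 (hBT.2.2.2 r hr)) (Or.inr ha)
    exact (hHU'.symm ▸ ⟨haT, haU⟩ : a ∈ H' ∩ Uᶜ).1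
  refine ⟨hW, hHT, ?_, ?_⟩
  · rintro _ ⟨r, hr, rfl⟩
    rcases hBT.mem_iff.1 hr with hrB | hrT
    · exact (sat_vrestrict_iff (r.atoms_form_subset.trans (hBT.2.2.1 r hrB)) W H T).1
        (hB.2.2.1 _ ⟨r, hrB, rfl⟩)
    · exact htop r hrT hHT hHU (hP.2.2.1 _ ⟨r, hr, rfl⟩)
  · rintro _ ⟨r, hr, rfl⟩ i hi
    rcases hBT.mem_iff.1 hr with hrB | hrT
    · exact (sat_vrestrict_iff (r.atoms_form_subset.trans (hBT.2.2.1 r hrB)) W i.1 i.2).1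
        (hB.2.2.2 _ ⟨r, hrB, rfl⟩ _ (mem_vrestrict hi U))
    · exact htop r hrT (hW.2 i hi) (hWU _ (mem_vrestrict hi Uᶜ))
        (hP.2.2.2 _ ⟨r, hr, rfl⟩ _ ⟨i, hi, rfl⟩)

end Splitting

section Glue

def glue (A : Set α) (X W : BView α) : BView α :=
  {p | ∃ i ∈ W, ∃ j ∈ X, j.2 = i.2 ∩ A ∧ p = (j.1 ∪ i.2 ∩ Aᶜ, i.2)}

variable {A : Set α} {X W : BView α}

lemma mem_glue {i j : Set α × Set α} (hi : i ∈ W) (hj : j ∈ X) (h : j.2 = i.2 ∩ A) :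
    (j.1 ∪ i.2 ∩ Aᶜ, i.2) ∈ glue A X W :=
  ⟨i, hi, j, hj, h, rfl⟩

lemma glue_fst_subset (hX : ∀ j ∈ X, j.1 ⊆ j.2) : ∀ p ∈ glue A X W, p.1 ⊆ p.2 := by
  rintro _ ⟨i, -, j, hj, h, rfl⟩
  exact Set.union_subset ((hX j hj).trans (h ▸ Set.inter_subset_left)) Set.inter_subset_left

lemma snd_subset_of_viewLE_vrestrict (hle : viewLE X (vrestrict W A)) :
    ∀ j ∈ X, j.2 ⊆ A := by
  intro j hj
  obtain ⟨_, ⟨i, -, hij⟩, -⟩ := hle.2 j hj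
  rw [(Prod.mk.inj hij).2]
  exact Set.inter_subset_right

lemma tview_glue (hW : totalView W) (hle : viewLE X (vrestrict W A)) :
    tview (glue A X W) = W := by
  ext ⟨H, T⟩
  constructor
  · rintro ⟨_, ⟨i, hi, j, -, -, rfl⟩, hp⟩
    obtain ⟨rfl, rfl⟩ := Prod.mk.inj hp
    exact mem_of_totalView hW (i := i) hi
  · intro hi
    obtain rfl : H = T := hW _ hi
    obtain ⟨H₁, hH₁, -⟩ := hle.1 _ (mem_vrestrict hi A)
    exact ⟨_, mem_glue (j := (H₁, H ∩ A)) hi hH₁ rfl, rfl⟩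

lemma vrestrict_glue (hX : ∀ j ∈ X, j.1 ⊆ j.2) (hle : viewLE X (vrestrict W A)) :
    vrestrict (glue A X W) A = X := by
  have hXA := snd_subset_of_viewLE_vrestrict hle
  have key : ∀ i j : Set α × Set α, j ∈ X → j.2 = i.2 ∩ A → (j.1 ∪ i.2 ∩ Aᶜ) ∩ A = j.1 := fun i j hj _ =>
    union_inter_eq_left_of_subset ((hX j hj).trans (hXA j hj)) Set.inter_subset_right
  ext p
  constructor
  · rintro ⟨_, ⟨i, -, j, hj, h, rfl⟩, rfl⟩
    rw [key i j hj h, ← h]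
    exact hj
  · intro hp
    obtain ⟨_, ⟨i, hi, hip⟩, -⟩ := hle.2 p hp
    have h : p.2 = i.2 ∩ A := (Prod.mk.inj hip).2
    refine ⟨_, mem_glue hi hp h, ?_⟩
    rw [key i p hp h, ← h]

lemma vrestrict_compl_glue (hW : totalView W) (hX : ∀ j ∈ X, j.1 ⊆ j.2)
    (hle : viewLE X (vrestrict W A)) : vrestrict (glue A X W) Aᶜ = vrestrict W Aᶜ := by
  have hXA := snd_subset_of_viewLE_vrestrict hle
  have key : ∀ i j : Set α × Set α, j ∈ X → (j.1 ∪ i.2 ∩ Aᶜ) ∩ Aᶜ = i.2 ∩ Aᶜ := fun i j hj =>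
    union_inter_compl_eq_right_of_subset ((hX j hj).trans (hXA j hj)) Set.inter_subset_right
  ext p
  constructor
  · rintro ⟨_, ⟨i, hi, j, hj, -, rfl⟩, rfl⟩
    have hi' := mem_vrestrict hi Aᶜ
    rw [hW i hi] at hi'
    rwa [key i j hj]
  · rintro ⟨i, hi, rfl⟩
    obtain ⟨H₁, hH₁, -⟩ := hle.1 _ (mem_vrestrict hi A)
    refine ⟨_, mem_glue (j := (H₁, i.2 ∩ A)) hi hH₁ rfl, ?_⟩
    rw [key i _ hH₁, hW i hi]

lemma isBView_glue (hW : isBView W) (hW' : totalView W) (hX : ∀ j ∈ X, j.1 ⊆ j.2)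
    (hle : viewLE X (vrestrict W A)) : isBView (glue A X W) := by
  refine ⟨?_, glue_fst_subset hX⟩
  have hne := hW.1
  rw [← tview_glue hW' hle, tview] at hne
  exact hne.of_image

lemma biLT_glue (hW : totalView W) (hX : ∀ j ∈ X, j.1 ⊆ j.2) {H T : Set α}
    (h : biLT X H (T ∩ A) (vrestrict W A) (T ∩ A) (T ∩ A)) :
    biLT (glue A X W) (H ∪ T ∩ Aᶜ) T W T T := by
  obtain ⟨⟨⟨-, hHT⟩, hle⟩, hne⟩ := h
  have hle' : viewLE (glue A X W) W := by
    simpa only [tview_glue hW hle] using viewLE_tview (glue_fst_subset (A := A) (W := W) hX)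
  refine ⟨⟨⟨rfl, Set.union_subset (hHT.trans Set.inter_subset_left) Set.inter_subset_left⟩,
    hle'⟩, fun heq => hne ?_⟩
  obtain ⟨hWeq, hHeq, -⟩ := Prod.mk.inj heq |>.imp_right Prod.mk.inj
  have hHA : (H ∪ T ∩ Aᶜ) ∩ A = H :=
    union_inter_eq_left_of_subset (hHT.trans Set.inter_subset_right) Set.inter_subset_right
  rw [← vrestrict_glue hX hle, hWeq, ← hHA, hHeq]

end Glue

section Equilibrium

lemma eqBeliefModel.subset_of_atoms_subset {Γ : Set (EForm α)} {A : Set α}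
    (hΓ : ∀ φ ∈ Γ, φ.atoms ⊆ A) {W : BView α} {T : Set α} (h : eqBeliefModel Γ W T) :
    T ⊆ A := by
  obtain ⟨hW, hbm, hmin⟩ := h
  set W' : BView α := (fun i => (i.2 ∩ A, i.2)) '' W
  have hW'wf : ∀ p ∈ W', p.1 ⊆ p.2 := by
    rintro _ ⟨i, -, rfl⟩
    exact Set.inter_subset_left
  have hW'A : vrestrict W' A = vrestrict W A := by
    simp only [W', vrestrict_eq_image, Set.image_image, Set.inter_assoc, Set.inter_self]
    exact Set.image_congr fun i hi => by rw [hW i hi]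
  have hbm' : beliefModel W' (T ∩ A) T Γ :=
    ⟨⟨hbm.1.1.image _, hW'wf⟩, Set.inter_subset_left,
      fun φ hφ => (sat_congr φ (hΓ φ hφ) hW'A (by rw [Set.inter_assoc, Set.inter_self]) rfl).2
        (hbm.2.2.1 φ hφ),
      fun φ hφ => (epSat_congr (hΓ φ hφ) hW'A).2 (hbm.2.2.2 φ hφ)⟩
  have hle : viewLE W' W := by
    have htv : tview W' = W := by
      conv_rhs => rw [← tview_eq_self hW]
      simp only [tview, W', Set.image_image]
    simpa only [htv] using viewLE_tview hW'wf
  by_contra hTA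
  refine hmin W' (T ∩ A) T hbm' ⟨⟨⟨rfl, Set.inter_subset_left⟩, hle⟩, fun heq => hTA ?_⟩
  exact Set.inter_eq_left.1 (Prod.mk.inj (Prod.mk.inj heq).2).1

variable {P B Tp : EProgram α} {U : Set α} {W : BView α} {T : Set α}

lemma isSplitting.eqBeliefModel_bottom (hBT : isSplitting P U B Tp)
    (h : eqBeliefModel (progTheory P) W T) :
    eqBeliefModel (progTheory B) (vrestrict W U) (T ∩ U) := by
  obtain ⟨hW, hbm, hmin⟩ := h
  refine ⟨totalView_vrestrict hW U, hBT.beliefModel_bottom hbm, fun X H T' hX hlt => ?_⟩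
  obtain rfl : T' = T ∩ U := hlt.1.1.1
  have hle := hlt.1.2
  have hHU : H ⊆ U := hlt.1.1.2.trans Set.inter_subset_right
  refine hmin _ _ _ ?_ (biLT_glue hW hX.1.2 hlt)
  refine hBT.beliefModel_of_bottom (isBView_glue hbm.1 hW hX.1.2 hle)
    (biLT_glue hW hX.1.2 hlt).1.1.2
    (union_inter_compl_eq_right_of_subset hHU Set.inter_subset_right) ?_ ?_ ?_
  · rw [vrestrict_compl_glue hW hX.1.2 hle]
    exact totalView_vrestrict hW Uᶜ
  · rwa [vrestrict_glue hX.1.2 hle, union_inter_eq_left_of_subset hHU Set.inter_subset_right]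
  · rwa [tview_glue hW hle]

lemma isSplitting.eqBeliefModel_top (hBT : isSplitting P U B Tp) (hwf : progWF Tp)
    (h : eqBeliefModel (progTheory P) W T) :
    eqBeliefModel (progTheory (EU Tp (vrestrict W U) U)) (vrestrict W Uᶜ) (T ∩ Uᶜ) := by
  obtain ⟨hW, hbm, hmin⟩ := h
  have hWU := totalView_vrestrict hW U
  have hsplit := (hBT.beliefModel_iff hwf rfl hWU).1 hbm
  refine ⟨totalView_vrestrict hW Uᶜ, hsplit.2, fun X H T' hX hlt => ?_⟩
  obtain rfl : T' = T ∩ Uᶜ := hlt.1.1.1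
  have hle := hlt.1.2
  have hHU : H ⊆ Uᶜ := hlt.1.1.2.trans Set.inter_subset_right
  have hgX : vrestrict (glue Uᶜ X W) Uᶜ = X := vrestrict_glue hX.1.2 hle
  have hgW := vrestrict_compl_glue hW hX.1.2 hle
  have hHX := union_inter_eq_left_of_subset hHU (Set.inter_subset_right (s := T) (t := Uᶜᶜ))
  have hHW := union_inter_compl_eq_right_of_subset hHU (Set.inter_subset_right (s := T) (t := Uᶜᶜ))
  have hlt' := biLT_glue hW hX.1.2 hlt
  simp only [compl_compl] at hgW hHX hHW hlt'
  refine hmin _ _ _ ?_ hlt'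
  rw [hBT.beliefModel_iff hwf hgW hWU, hgW, hgX, hHX, hHW]
  exact ⟨hsplit.1, hX⟩

lemma isSplitting.eqBeliefModel_of_bottom_top (hBT : isSplitting P U B Tp) (hwf : progWF Tp)
    (hb : eqBeliefModel (progTheory B) (vrestrict W U) (T ∩ U))
    (ht : eqBeliefModel (progTheory (EU Tp (vrestrict W U) U)) (vrestrict W Uᶜ) (T ∩ Uᶜ)) :
    eqBeliefModel (progTheory P) W T := by
  have hW : totalView W := totalView_of_vrestrict hb.1 ht.1
  refine ⟨hW, (hBT.beliefModel_iff hwf rfl hb.1).2 ⟨hb.2.1, ht.2.1⟩, ?_⟩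
  rintro W₁ H₁ T₁ hbm₁ ⟨hle, hne⟩
  obtain rfl : T₁ = T := hle.1.1
  by_cases hbot : (vrestrict W₁ U, H₁ ∩ U, T₁ ∩ U) = (vrestrict W U, T₁ ∩ U, T₁ ∩ U)
  · obtain ⟨hWU, hHU, -⟩ := Prod.mk.inj hbot |>.imp_right Prod.mk.inj
    have htop := ((hBT.beliefModel_iff hwf hWU hb.1).1 hbm₁).2
    refine ht.2.2 _ _ _ htop ⟨biLE_vrestrict hle Uᶜ, fun heq => hne ?_⟩
    obtain ⟨hWUc, hHUc, -⟩ := Prod.mk.inj heq |>.imp_right Prod.mk.inj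
    have hW₁ : totalView W₁ := totalView_of_vrestrict (hWU ▸ hb.1) (hWUc ▸ ht.1)
    rw [← tview_eq_self hW₁, tview_eq_of_viewLE hle.2 hW, ← Set.inter_union_compl H₁ U, hHU,
      hHUc, Set.inter_union_compl]
  · exact hb.2.2 _ _ _ (hBT.beliefModel_bottom hbm₁) ⟨biLE_vrestrict hle U, hbot⟩

theorem isSplitting.eqBeliefModel_iff (hBT : isSplitting P U B Tp) (hwf : progWF Tp) :
    eqBeliefModel (progTheory P) W T ↔
      eqBeliefModel (progTheory B) (vrestrict W U) (T ∩ U) ∧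
      eqBeliefModel (progTheory (EU Tp (vrestrict W U) U)) (vrestrict W Uᶜ) (T ∩ Uᶜ) :=
  ⟨fun h => ⟨hBT.eqBeliefModel_bottom h, hBT.eqBeliefModel_top hwf h⟩,
    fun h => hBT.eqBeliefModel_of_bottom_top hwf h.1 h.2⟩

end Equilibrium

section WorldViews

variable {P B Tp : EProgram α} {U : Set α}

lemma isSplitting.FAEEL_split (hBT : isSplitting P U B Tp) (hwf : progWF Tp) {W : BView α}
    (hF : FAEEL (progTheory P) W) :
    FAEEL (progTheory B) (vrestrict W U) ∧
      FAEEL (progTheory (EU Tp (vrestrict W U) U)) (vrestrict W Uᶜ) ∧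
      W = vjoin (vrestrict W U) (vrestrict W Uᶜ) := by
  obtain ⟨hne, hW⟩ := FAEEL_iff.1 hF
  set Sb := {T | eqBeliefModel (progTheory B) (vrestrict W U) T}
  set St := {T | eqBeliefModel (progTheory (EU Tp (vrestrict W U) U)) (vrestrict W Uᶜ) T}
  have hSb : ∀ X ∈ Sb, X ⊆ U := fun X hX => hX.subset_of_atoms_subset hBT.atoms_bottom
  have hSt : ∀ X ∈ St, X ⊆ Uᶜ := fun X hX => hX.subset_of_atoms_subset (hBT.atoms_EU hwf _)
  have hS : {T | eqBeliefModel (progTheory P) W T} = Set.image2 (· ∪ ·) Sb St :=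
    eq_image2_union_of_forall_mem_iff hSb hSt fun T => hBT.eqBeliefModel_iff hwf
  rw [hS] at hW
  have hSne : (Set.image2 (· ∪ ·) Sb St).Nonempty := by
    rw [hW, ofSets] at hne
    exact hne.of_image
  obtain ⟨hSbne, hStne⟩ := Set.image2_nonempty_iff.1 hSne
  have hWU : vrestrict W U = ofSets Sb := by
    rw [congrArg (vrestrict · U) hW, vrestrict_ofSets, image_inter_image2_union hSb hSt hStne]
  have hWUc : vrestrict W Uᶜ = ofSets St := by
    rw [congrArg (vrestrict · Uᶜ) hW, vrestrict_ofSets,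
      image_inter_compl_image2_union hSb hSt hSbne]
  refine ⟨FAEEL_iff.2 ⟨vrestrict_nonempty_iff.2 hne, hWU⟩,
    FAEEL_iff.2 ⟨vrestrict_nonempty_iff.2 hne, hWUc⟩, ?_⟩
  rw [hWU, hWUc, vjoin_ofSets]
  exact hW

lemma isSplitting.FAEEL_vjoin (hBT : isSplitting P U B Tp) (hwf : progWF Tp) {Wb Wt : BView α}
    (hb : FAEEL (progTheory B) Wb) (ht : FAEEL (progTheory (EU Tp Wb U)) Wt) :
    FAEEL (progTheory P) (vjoin Wb Wt) := by
  obtain ⟨hbne, hWb⟩ := FAEEL_iff.1 hb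
  obtain ⟨htne, hWt⟩ := FAEEL_iff.1 ht
  set Sb := {T | eqBeliefModel (progTheory B) Wb T}
  set St := {T | eqBeliefModel (progTheory (EU Tp Wb U)) Wt T}
  have hSb : ∀ X ∈ Sb, X ⊆ U := fun X hX => hX.subset_of_atoms_subset hBT.atoms_bottom
  have hSt : ∀ X ∈ St, X ⊆ Uᶜ := fun X hX => hX.subset_of_atoms_subset (hBT.atoms_EU hwf _)
  have hSbne : Sb.Nonempty := by
    rw [hWb, ofSets] at hbne
    exact hbne.of_image
  have hStne : St.Nonempty := by
    rw [hWt, ofSets] at htne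
    exact htne.of_image
  have hJ : vjoin Wb Wt = ofSets (Set.image2 (· ∪ ·) Sb St) := by
    conv_lhs => rw [hWb, hWt]
    exact vjoin_ofSets Sb St
  have hJU : vrestrict (vjoin Wb Wt) U = Wb := by
    rw [hJ, vrestrict_ofSets, image_inter_image2_union hSb hSt hStne, ← hWb]
  have hJUc : vrestrict (vjoin Wb Wt) Uᶜ = Wt := by
    rw [hJ, vrestrict_ofSets, image_inter_compl_image2_union hSb hSt hSbne, ← hWt]
  have hS : {T | eqBeliefModel (progTheory P) (vjoin Wb Wt) T} = Set.image2 (· ∪ ·) Sb St :=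
    eq_image2_union_of_forall_mem_iff hSb hSt fun T => by
      rw [Set.mem_ofPred_eq, hBT.eqBeliefModel_iff hwf, hJU, hJUc]
      rfl
  refine FAEEL_iff.2 ⟨?_, ?_⟩
  · rw [hJ]
    exact (hSbne.image2 hStne).image _
  · rw [hS]
    exact hJ

end WorldViews

theorem stmt9_general {α : Type} (P : EProgram α) (hwf : progWF P) (U : Set α)
    (B Tp : EProgram α) (hBT : isSplitting P U B Tp)
    (W : BView α) :
    (FAEEL (progTheory P) W ↔
      ∃ Wb Wt, FAEEL (progTheory B) Wb ∧ FAEEL (progTheory (EU Tp Wb U)) Wt ∧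
        W = vjoin Wb Wt) ∧
    (FAEEL (progTheory P) W →
      FAEEL (progTheory B) (vrestrict W U) ∧
      FAEEL (progTheory (EU Tp (vrestrict W U) U)) (vrestrict W Uᶜ) ∧
      W = vjoin (vrestrict W U) (vrestrict W Uᶜ)) := by
  have hwfTp : progWF Tp := fun r hr => hwf r (hBT.mem_iff.2 (Or.inr hr))
  refine ⟨⟨fun hF => ⟨_, _, hBT.FAEEL_split hwfTp hF⟩, ?_⟩, hBT.FAEEL_split hwfTp⟩
  rintro ⟨Wb, Wt, hb, ht, rfl⟩
  exact hBT.FAEEL_vjoin hwfTp hb ht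

/-- Epistemic splitting in FAEEL, Main Theorem. -/
theorem stmt9 {α : Type} (P : EProgram α) (hwf : progWF P) (U : Set α)
    (hU : splittingSet P U) (B Tp : EProgram α) (hBT : isSplitting P U B Tp)
    (W : BView α) (hW : totalView W) :
    (FAEEL (progTheory P) W ↔
      ∃ Wb Wt, FAEEL (progTheory B) Wb ∧ FAEEL (progTheory (EU Tp Wb U)) Wt ∧
        W = vjoin Wb Wt) ∧
    (FAEEL (progTheory P) W →
      FAEEL (progTheory B) (vrestrict W U) ∧
      FAEEL (progTheory (EU Tp (vrestrict W U) U)) (vrestrict W Uᶜ) ∧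
      W = vjoin (vrestrict W U) (vrestrict W Uᶜ)) :=
  stmt9_general P hwf U B Tp hBT W
end Epist
end

section
/- A total belief view W is an EEL-world view of a theory Γ if and only if W is an epistemic model of Γ and there is no simple epistemic model W' of Γ such that W' ≺ W. -/
namespace Epist

attribute [local instance] Classical.propDecidable

variable {α : Type}

end Epist

/-!
Over a total view `W`, and for views `W'` whose members satisfy `H ⊆ T`, the relation
`W' ⪯ W` says exactly that `W'` has the same `T`-components as `W`, i.e. `W'^t = W`;
and then `W' ≠ W` says exactly that `W'` is not total, i.e. contains some `⟨H, T⟩` with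
`H ⊂ T`. So the condition `W' ≺ W` is the condition in the definition of EEL-world views.
-/

namespace Epist

variable {α : Type}

theorem totalView_iff_tview_eq {W : BView α} : totalView W ↔ tview W = W := by
  constructor
  · intro hW
    ext i
    constructor
    · rintro ⟨j, hj, rfl⟩
      convert hj using 1
      exact Prod.ext (hW j hj).symm rfl
    · intro hi
      exact ⟨i, hi, Prod.ext (hW i hi).symm rfl⟩
  · intro hW i hi
    rw [← hW] at hi
    obtain ⟨j, -, rfl⟩ := hi
    rfl

theorem not_totalView_iff {W : BView α} (hW : ∀ i ∈ W, i.1 ⊆ i.2) :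
    ¬ totalView W ↔ ∃ i ∈ W, i.1 ⊂ i.2 := by
  simp only [totalView, not_forall, exists_prop, ssubset_iff_subset_ne]
  exact exists_congr fun i => and_congr_right fun hi => (and_iff_right (hW i hi)).symm

theorem viewLE_iff_tview_eq {W' W : BView α} (hW : totalView W)
    (hW' : ∀ i ∈ W', i.1 ⊆ i.2) : viewLE W' W ↔ tview W' = W := by
  constructor
  · rintro ⟨hcover, hbound⟩
    ext i
    constructor
    · rintro ⟨j, hj, rfl⟩
      obtain ⟨H₂, hH₂, -⟩ := hbound j hj
      obtain rfl : H₂ = j.2 := hW _ hH₂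
      exact hH₂
    · intro hi
      obtain ⟨H₁, hH₁, -⟩ := hcover i hi
      exact ⟨(H₁, i.2), hH₁, Prod.ext (hW i hi).symm rfl⟩
  · rintro rfl
    refine ⟨?_, fun i hi => ⟨i.2, ⟨i, hi, rfl⟩, hW' i hi⟩⟩
    rintro _ ⟨j, hj, rfl⟩
    exact ⟨j.1, hj, hW' j hj⟩

theorem viewLT_iff_tview_eq {W' W : BView α} (hW : totalView W)
    (hW' : ∀ i ∈ W', i.1 ⊆ i.2) :
    viewLT W' W ↔ tview W' = W ∧ ∃ i ∈ W', i.1 ⊂ i.2 := by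
  rw [viewLT, viewLE_iff_tview_eq hW hW', ← not_totalView_iff hW']
  refine and_congr_right fun htv => ?_
  rw [totalView_iff_tview_eq, htv, ne_comm]

/-- W is an EEL-world view of Γ iff W is an epistemic model of Γ and
no simple epistemic model of Γ is ≺-smaller than W. -/
theorem stmt14 {α : Type} (Γ : Set (EForm α)) (W : BView α) (hW : totalView W) :
    EEL Γ W ↔ epModel W Γ ∧ ¬ ∃ W', simpleView W' ∧ epModel W' Γ ∧ viewLT W' W := by
  have hsmaller : (∃ W', simpleView W' ∧ epModel W' Γ ∧ viewLT W' W) ↔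
      ∃ W', simpleView W' ∧ epModel W' Γ ∧ tview W' = W ∧ ∃ i ∈ W', i.1 ⊂ i.2 :=
    exists_congr fun W' => and_congr_right fun _ => and_congr_right fun hM' =>
      viewLT_iff_tview_eq hW hM'.1.2
  rw [EEL, hsmaller, and_iff_right hW]

end Epist
end
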